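/- The following inclusions hold: (1) for every ρ ∈ {2,…,⌊(n+1)/2⌋}, {(x, xxᵀ) : x ∈ F, ‖x‖₀ ≤ 2ρ − 1} ⊆ F^{R3}_ρ; (2) for every ρ ∈ {⌊(n+1)/2⌋ + 1,…,n}, {(x, xxᵀ) : x ∈ F} ⊆ F^{R3}_ρ; (3) for every ρ ∈ {2,…,⌊n/2⌋}, {(x, xxᵀ) : x ∈ G_ρ} ⊆ F^{R3}_ρ, where G_ρ := {x ∈ F : ‖x‖₀ > 2ρ − 1 and for all 1 ≤ i < j ≤ n with x_i x_j > 0, x_i x_j / (1 − x_i − x_j) ≤ (ρ − 1)(ρ − 2) / ((‖x‖₀ − 2)(‖x‖₀ − 2ρ + 1))}. -/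

import Mathlib

open Matrix BigOperators

noncomputable section

def simplexF (n : ℕ) : Set (Fin n → ℝ) :=
  {x | (∑ i, x i) = 1 ∧ ∀ i, 0 ≤ x i}

def sparsity {n : ℕ} (x : Fin n → ℝ) : ℕ :=
  Set.ncard {i | x i ≠ 0}

def sparseF (n ρ : ℕ) : Set (Fin n → ℝ) :=
  {x | x ∈ simplexF n ∧ sparsity x ≤ ρ}

def quadForm {n : ℕ} (Q : Matrix (Fin n) (Fin n) ℝ) (x : Fin n → ℝ) : ℝ :=
  x ⬝ᵥ Q.mulVec x

def ell {n : ℕ} (Q : Matrix (Fin n) (Fin n) ℝ) : ℝ :=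
  sInf (quadForm Q '' simplexF n)

def ellSparse {n : ℕ} (Q : Matrix (Fin n) (Fin n) ℝ) (ρ : ℕ) : ℝ :=
  sInf (quadForm Q '' sparseF n ρ)

def ip {n : ℕ} (Q X : Matrix (Fin n) (Fin n) ℝ) : ℝ :=
  ∑ i, ∑ j, Q i j * X i j

def R1Feasible {n : ℕ} (ρ : ℕ) (x u : Fin n → ℝ)
    (X U R : Matrix (Fin n) (Fin n) ℝ) : Prop :=
  X.IsSymm ∧ U.IsSymm ∧
  (∑ i, x i) = 1 ∧
  (∑ i, u i) = (ρ : ℝ) ∧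
  (∀ i, x i ≤ u i) ∧
  (∀ i, 0 ≤ x i) ∧
  (∀ i, U i i = u i) ∧
  (∀ i, (∑ j, X i j) = x i) ∧
  (∀ j, (∑ i, R i j) = u j) ∧
  (∀ i, (∑ j, R i j) = (ρ : ℝ) * x i) ∧
  (∀ i, (∑ j, U i j) = (ρ : ℝ) * u i) ∧
  (∀ i j, 0 ≤ X i j - R j i - R i j + U i j) ∧
  (∀ i j, X i j - R j i ≤ 0) ∧
  (∀ i j, R i j - U i j ≤ 0) ∧
  (∀ i j, 0 ≤ X i j) ∧ (∀ i j, 0 ≤ R i j) ∧ (∀ i j, 0 ≤ U i j)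

def FR1proj (n ρ : ℕ) : Set ((Fin n → ℝ) × Matrix (Fin n) (Fin n) ℝ) :=
  {p | ∃ u U R, R1Feasible ρ p.1 u p.2 U R}

def FR1 (n : ℕ) : Set ((Fin n → ℝ) × Matrix (Fin n) (Fin n) ℝ) :=
  {p | p.2.IsSymm ∧ (∑ i, p.1 i) = 1 ∧ (∀ i, (∑ j, p.2 i j) = p.1 i) ∧
    (∀ i, 0 ≤ p.1 i) ∧ (∀ i j, 0 ≤ p.2 i j)}

def bigMat {n : ℕ} (x u : Fin n → ℝ) (X U R : Matrix (Fin n) (Fin n) ℝ) :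
    Matrix (Unit ⊕ (Fin n ⊕ Fin n)) (Unit ⊕ (Fin n ⊕ Fin n)) ℝ :=
  Matrix.fromBlocks (Matrix.of fun _ _ => (1 : ℝ))
    (Matrix.of fun (_ : Unit) j => Sum.elim x u j)
    (Matrix.of fun i (_ : Unit) => Sum.elim x u i)
    (Matrix.fromBlocks X R Rᵀ U)

def R3Feasible {n : ℕ} (ρ : ℕ) (x u : Fin n → ℝ)
    (X U R : Matrix (Fin n) (Fin n) ℝ) : Prop :=
  R1Feasible ρ x u X U R ∧ (bigMat x u X U R).PosSemidef

def FR3proj (n ρ : ℕ) : Set ((Fin n → ℝ) × Matrix (Fin n) (Fin n) ℝ) :=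
  {p | ∃ u U R, R3Feasible ρ p.1 u p.2 U R}

/-!
Take `X = x xᵀ`, `R = x uᵀ` and `U = u uᵀ + M`. The block matrix is then `w wᵀ + (0 ⊕ 0 ⊕ M)` with
`w = (1, x, u)`, so it is positive semidefinite as soon as `M` is, and the linear constraints reduce
to `M i i = u i (1 - u i)`, `M e = 0` and `M i j ≥ -(u i - x i)(u j - x j)` for `i ≠ j`.

If `‖x‖₀ ≤ ρ`, let `u` be the indicator of a `ρ`-set containing the support of `x` and `M = 0`.
Otherwise, with `s = ‖x‖₀` and `t = 1 - x` on the support, take `u = x + β t` and `M` a nonnegative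
combination of the Laplacians of the complete graphs weighted by `t i t j` and by `x i x j`.
The constraints `eᵀu = ρ` and `diag U = u` fix the coefficients, and the off-diagonal bound becomes
`(s - 2)(s - 2ρ + 1) x i x j ≤ (ρ - 1)(ρ - 2)(1 - x i - x j)`: this is automatic when
`s ≤ 2ρ - 1`, and it is the inequality defining `G_ρ` otherwise.
-/

open Finset

theorem Matrix.PosSemidef.fromBlocks_zero₁₁ {m ι R : Type*} [Fintype m] [Fintype ι] [CommRing R]
    [PartialOrder R] [StarRing R] [StarOrderedRing R] {D : Matrix ι ι R} (hD : D.PosSemidef) :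
    (fromBlocks (0 : Matrix m m R) 0 0 D).PosSemidef := by
  classical
  have h := hD.conjTranspose_mul_mul_same (fromCols (0 : Matrix ι m R) (1 : Matrix ι ι R))
  rw [conjTranspose_fromCols_eq_fromRows_conjTranspose, fromRows_mul, fromRows_mul_fromCols] at h
  simpa using h

-- The Laplacian of the complete graph on `ι` with edge weights `v i * v j`.
def productLaplacian {ι : Type*} [Fintype ι] [DecidableEq ι] (v : ι → ℝ) : Matrix ι ι ℝ :=
  (∑ i, v i) • diagonal v - vecMulVec v v

section productLaplacian

variable {ι : Type*} [Fintype ι] [DecidableEq ι] (v : ι → ℝ)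

theorem productLaplacian_apply (i j : ι) :
    productLaplacian v i j = (if i = j then (∑ k, v k) * v i else 0) - v i * v j := by
  by_cases h : i = j <;> simp [productLaplacian, vecMulVec_apply, h]

theorem sum_productLaplacian_row (i : ι) : ∑ j, productLaplacian v i j = 0 := by
  simp [productLaplacian_apply, sum_sub_distrib, ← mul_sum, mul_comm]

theorem posSemidef_productLaplacian {v : ι → ℝ} (hv : 0 ≤ v) :
    (productLaplacian v).PosSemidef := by
  refine .of_dotProduct_mulVec_nonneg (by simp [productLaplacian, IsHermitian]) fun y => ?_
  have hCS : (v ⬝ᵥ y) ^ 2 ≤ (∑ i, v i) * (y ⬝ᵥ fun i => v i * y i) :=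
    sum_sq_le_sum_mul_sum_of_sq_le_mul _ (fun i _ => hv i)
      (fun i _ => show 0 ≤ y i * (v i * y i) by
        rw [mul_left_comm]; exact mul_nonneg (hv i) (mul_self_nonneg _))
      fun i _ => le_of_eq (by ring)
  have hdiag : diagonal v *ᵥ y = fun i => v i * y i := funext (mulVec_diagonal v y)
  simp only [productLaplacian, sub_mulVec, smul_mulVec, vecMulVec_mulVec, hdiag, star_trivial,
    dotProduct_sub, dotProduct_smul, MulOpposite.smul_eq_mul_unop, MulOpposite.unop_op,
    smul_eq_mul, dotProduct_comm y v]
  linarith [hCS]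

end productLaplacian

section

variable {n : ℕ}

theorem sparsity_eq_card_filter (x : Fin n → ℝ) : sparsity x = #{i | x i ≠ 0} := by
  rw [sparsity, Set.ncard_eq_toFinset_card']
  congr 1
  ext i
  simp

theorem sparsity_le (x : Fin n → ℝ) : sparsity x ≤ n := by
  simpa [sparsity_eq_card_filter] using card_filter_le univ fun i => x i ≠ 0

theorem bigMat_vecMulVec_add (x u : Fin n → ℝ) (M : Matrix (Fin n) (Fin n) ℝ) :
    bigMat x u (vecMulVec x x) (vecMulVec u u + M) (vecMulVec x u)
      = vecMulVec (Sum.elim 1 (Sum.elim x u)) (Sum.elim 1 (Sum.elim x u))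
        + fromBlocks (0 : Matrix Unit Unit ℝ) 0 0 (fromBlocks 0 0 0 M) := by
  ext (_ | i | i) (_ | j | j) <;> simp [bigMat, vecMulVec_apply, mul_comm]

theorem r3Feasible_vecMulVec_add {ρ : ℕ} {x u : Fin n → ℝ} {M : Matrix (Fin n) (Fin n) ℝ}
    (hx : x ∈ simplexF n) (hu : ∑ i, u i = ρ) (hxu : ∀ i, x i ≤ u i) (hu1 : ∀ i, u i ≤ 1)
    (hM : M.PosSemidef) (hdiag : ∀ i, M i i = u i * (1 - u i)) (hrow : ∀ i, ∑ j, M i j = 0)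
    (hoff : ∀ i j, i ≠ j → -((u i - x i) * (u j - x j)) ≤ M i j) :
    R3Feasible ρ x u (vecMulVec x x) (vecMulVec u u + M) (vecMulVec x u) := by
  obtain ⟨hx1, hx0⟩ := hx
  have hu0 i : 0 ≤ u i := (hx0 i).trans (hxu i)
  have hsymm : M.IsSymm := by simpa using hM.1
  have hlow i j : -((u i - x i) * (u j - x j)) ≤ M i j := by
    rcases eq_or_ne i j with rfl | h
    · nlinarith [hdiag i, hu1 i, hu0 i]
    · exact hoff i j h
  have hRU i j : x i * u j ≤ u i * u j + M i j := by
    nlinarith [hlow i j, mul_nonneg (sub_nonneg.2 (hxu i)) (hx0 j)]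
  refine ⟨⟨?_, ?_, hx1, hu, hxu, hx0, ?_, ?_, ?_, ?_, ?_, ?_, ?_, ?_, ?_, ?_, ?_⟩, ?_⟩
  · exact transpose_vecMulVec x x
  · rw [IsSymm, transpose_add, transpose_vecMulVec, hsymm.eq]
  · intro i; simp [vecMulVec_apply, hdiag]; ring
  · intro i; simp [vecMulVec_apply, ← mul_sum, hx1]
  · intro j; simp [vecMulVec_apply, ← sum_mul, hx1]
  · intro i; simp [vecMulVec_apply, ← mul_sum, hu, mul_comm]
  · intro i; simp [vecMulVec_apply, sum_add_distrib, ← mul_sum, hu, hrow, mul_comm]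
  · intro i j; simp only [Matrix.add_apply, vecMulVec_apply]; linarith [hlow i j]
  · intro i j; simp only [vecMulVec_apply]; nlinarith [hx0 j, hxu i]
  · intro i j; simp only [Matrix.add_apply, vecMulVec_apply]; linarith [hRU i j]
  · intro i j; exact mul_nonneg (hx0 i) (hx0 j)
  · intro i j; exact mul_nonneg (hx0 i) (hu0 j)
  · intro i j; exact (mul_nonneg (hx0 i) (hu0 j)).trans (hRU i j)
  · rw [bigMat_vecMulVec_add]
    exact (posSemidef_vecMulVec_self_star _).add hM.fromBlocks_zero₁₁.fromBlocks_zero₁₁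

variable {x : Fin n → ℝ}

theorem apply_le_one_of_mem_simplexF (hx : x ∈ simplexF n) (i : Fin n) : x i ≤ 1 :=
  hx.1 ▸ single_le_sum (fun j _ => hx.2 j) (mem_univ i)

theorem sum_le_one_of_mem_simplexF (hx : x ∈ simplexF n) (s : Finset (Fin n)) :
    ∑ i ∈ s, x i ≤ 1 :=
  hx.1 ▸ sum_le_sum_of_subset_of_nonneg (subset_univ s) fun i _ _ => hx.2 i

theorem add_le_one_of_mem_simplexF (hx : x ∈ simplexF n) {i j : Fin n} (hij : i ≠ j) :
    x i + x j ≤ 1 := by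
  simpa [sum_pair hij] using sum_le_one_of_mem_simplexF hx {i, j}

theorem add_lt_one_of_two_lt_sparsity (hx : x ∈ simplexF n) (hs : 2 < sparsity x) {i j : Fin n}
    (hij : i ≠ j) : x i + x j < 1 := by
  obtain ⟨k, hk, hkij⟩ : ∃ k, x k ≠ 0 ∧ k ∉ ({i, j} : Finset (Fin n)) := by
    have : #({i, j} : Finset (Fin n)) < #{k | x k ≠ 0} :=
      (card_le_two).trans_lt (sparsity_eq_card_filter x ▸ hs)
    obtain ⟨k, hk, hkij⟩ := exists_mem_notMem_of_card_lt_card this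
    exact ⟨k, (mem_filter.1 hk).2, hkij⟩
  have h3 := sum_le_one_of_mem_simplexF hx (insert k {i, j})
  rw [sum_insert hkij, sum_pair hij] at h3
  linarith [(hx.2 k).lt_of_ne' hk]

theorem mem_FR3proj_of_support_subset {ρ : ℕ} (hx : x ∈ simplexF n) {T : Finset (Fin n)}
    (hT : ∀ i, x i ≠ 0 → i ∈ T) {α β γ : ℝ} (hα : 0 ≤ α) (hβ : 0 ≤ β) (hβ1 : β ≤ 1)
    (hγ : 0 ≤ γ) (hρ : 1 + β * (#T - 1) = ρ) (hαβ : α * (#T - 2) = β * (1 - β))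
    (hαγ : α + γ = (1 - β) ^ 2)
    (hpair : ∀ i ∈ T, ∀ j ∈ T, i ≠ j →
      γ * (x i * x j) ≤ (β ^ 2 - α) * ((1 - x i) * (1 - x j))) :
    (x, vecMulVec x x) ∈ FR3proj n ρ := by
  have hxT i (hi : i ∉ T) : x i = 0 := by_contra fun h => hi (hT i h)
  set t : Fin n → ℝ := fun i => if i ∈ T then 1 - x i else 0 with ht
  have ht0 : 0 ≤ t := fun i => by
    by_cases hi : i ∈ T <;> simp [ht, hi, apply_le_one_of_mem_simplexF hx i]
  have hsum_t : ∑ i, t i = #T - 1 := by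
    have hxT_sum : ∑ i ∈ T, x i = 1 :=
      hx.1 ▸ sum_subset (subset_univ T) fun i _ hi => hxT i hi
    simp [ht, sum_ite_mem, sum_sub_distrib, hxT_sum]
  refine ⟨x + β • t, _, _, r3Feasible_vecMulVec_add
    (M := α • productLaplacian t + γ • productLaplacian x) hx ?_ ?_ ?_ ?_ ?_ ?_ ?_⟩
  · simp [sum_add_distrib, ← mul_sum, hsum_t, hx.1, hρ]
  · intro i; simpa using mul_nonneg hβ (ht0 i)
  · intro i
    by_cases hi : i ∈ T
    · simp only [Pi.add_apply, Pi.smul_apply, ht, if_pos hi, smul_eq_mul]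
      nlinarith [apply_le_one_of_mem_simplexF hx i]
    · simp [ht, hi, hxT i hi]
  · exact ((posSemidef_productLaplacian ht0).smul hα).add
      ((posSemidef_productLaplacian hx.2).smul hγ)
  · intro i
    simp only [Matrix.add_apply, Matrix.smul_apply, productLaplacian_apply, ↓reduceIte, hsum_t,
      hx.1]
    by_cases hi : i ∈ T
    · simp only [Pi.add_apply, Pi.smul_apply, ht, if_pos hi, smul_eq_mul]
      linear_combination (1 - x i) * hαβ + (x i * (1 - x i)) * hαγ
    · simp [ht, hi, hxT i hi]
  · intro i
    simp [sum_add_distrib, ← mul_sum, sum_productLaplacian_row]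
  · intro i j hij
    simp only [Matrix.add_apply, Matrix.smul_apply, productLaplacian_apply, if_neg hij]
    by_cases hi : i ∈ T
    · by_cases hj : j ∈ T
      · simp only [Pi.add_apply, Pi.smul_apply, ht, if_pos hi, if_pos hj, smul_eq_mul]
        linarith [hpair i hi j hj hij]
      · simp [ht, hj, hxT j hj]
    · simp [ht, hi, hxT i hi]

theorem mem_FR3proj_of_sparsity_le {ρ : ℕ} (hx : x ∈ simplexF n) (hs : sparsity x ≤ ρ)
    (hρ : ρ ≤ n) : (x, vecMulVec x x) ∈ FR3proj n ρ := by
  rw [sparsity_eq_card_filter] at hs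
  obtain ⟨T, hsupp, hT⟩ := exists_superset_card_eq hs (by simpa using hρ)
  refine mem_FR3proj_of_support_subset hx (T := T) (α := 0) (β := 1) (γ := 0)
    (fun i hi => hsupp (by simpa using hi)) le_rfl zero_le_one le_rfl le_rfl
    (by simp [hT]) (by simp) (by simp) fun i _ j _ _ => ?_
  nlinarith [apply_le_one_of_mem_simplexF hx i, apply_le_one_of_mem_simplexF hx j]

theorem mem_FR3proj_of_pair_bound {ρ : ℕ} (hx : x ∈ simplexF n) (hρ : 2 ≤ ρ)
    (hs : ρ < sparsity x)
    (hpair : ∀ i j, x i ≠ 0 → x j ≠ 0 → i ≠ j →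
      ((sparsity x : ℝ) - 2) * ((sparsity x : ℝ) - 2 * ρ + 1) * (x i * x j)
        ≤ ((ρ : ℝ) - 1) * ((ρ : ℝ) - 2) * (1 - x i - x j)) :
    (x, vecMulVec x x) ∈ FR3proj n ρ := by
  set s : ℝ := (sparsity x : ℝ) with hs_def
  have hρ' : (2 : ℝ) ≤ ρ := by exact_mod_cast hρ
  have hs' : (ρ : ℝ) + 1 ≤ s := by rw [hs_def]; exact_mod_cast hs
  have h1 : 0 < s - 1 := by linarith
  have h2 : 0 < s - 2 := by linarith
  have hT : (#{i | x i ≠ 0} : ℝ) = s := by rw [hs_def, sparsity_eq_card_filter]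
  have hβα : ((ρ - 1) / (s - 1)) ^ 2 - (s - ρ) * (ρ - 1) / ((s - 1) ^ 2 * (s - 2))
      = (ρ - 1) * (ρ - 2) / ((s - 1) * (s - 2)) := by
    field_simp
    ring
  refine mem_FR3proj_of_support_subset hx (T := {i | x i ≠ 0}) (fun i hi => by simpa using hi)
    (α := (s - ρ) * (ρ - 1) / ((s - 1) ^ 2 * (s - 2))) (β := (ρ - 1) / (s - 1))
    (γ := (s - ρ) * (s - ρ - 1) / ((s - 1) * (s - 2)))
    (div_nonneg (by nlinarith) (by positivity)) (div_nonneg (by linarith) h1.le)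
    ((div_le_one h1).2 (by linarith)) (div_nonneg (by nlinarith) (by positivity))
    (by rw [hT]; field_simp; ring) (by rw [hT]; field_simp; ring) (by field_simp; ring) ?_
  intro i hi j hj hij
  rw [hβα, div_mul_eq_mul_div, div_mul_eq_mul_div, div_le_div_iff_of_pos_right (by positivity)]
  linarith [hpair i j (by simpa using hi) (by simpa using hj) hij]

theorem mem_FR3proj_of_sparsity_le_two_mul_sub_one {ρ : ℕ} (hx : x ∈ simplexF n) (hρ : 2 ≤ ρ)
    (hρn : ρ ≤ n) (hs : sparsity x ≤ 2 * ρ - 1) : (x, vecMulVec x x) ∈ FR3proj n ρ := by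
  rcases le_or_gt (sparsity x) ρ with hsρ | hsρ
  · exact mem_FR3proj_of_sparsity_le hx hsρ hρn
  refine mem_FR3proj_of_pair_bound hx hρ hsρ fun i j _ _ hij => ?_
  have hs' : (sparsity x : ℝ) + 1 ≤ 2 * ρ := by exact_mod_cast (by omega : sparsity x + 1 ≤ 2 * ρ)
  have hs₂ : (2 : ℝ) ≤ sparsity x := by exact_mod_cast (by omega : 2 ≤ sparsity x)
  have hρ' : (2 : ℝ) ≤ ρ := by exact_mod_cast hρ
  have hlhs : ((sparsity x : ℝ) - 2) * ((sparsity x : ℝ) - 2 * ρ + 1) * (x i * x j) ≤ 0 :=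
    mul_nonpos_of_nonpos_of_nonneg (mul_nonpos_of_nonneg_of_nonpos (by linarith) (by linarith))
      (mul_nonneg (hx.2 i) (hx.2 j))
  have hrhs : 0 ≤ ((ρ : ℝ) - 1) * ((ρ : ℝ) - 2) * (1 - x i - x j) :=
    mul_nonneg (mul_nonneg (by linarith) (by linarith))
      (by linarith [add_le_one_of_mem_simplexF hx hij])
  exact hlhs.trans hrhs

theorem mem_FR3proj_of_div_bound {ρ : ℕ} (hx : x ∈ simplexF n) (hρ : 2 ≤ ρ)
    (hs : 2 * ρ - 1 < sparsity x)
    (hdiv : ∀ i j : Fin n, i < j → 0 < x i * x j →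
      x i * x j / (1 - x i - x j) ≤
        ((ρ : ℝ) - 1) * ((ρ : ℝ) - 2) /
          (((sparsity x : ℝ) - 2) * ((sparsity x : ℝ) - 2 * (ρ : ℝ) + 1))) :
    (x, vecMulVec x x) ∈ FR3proj n ρ := by
  refine mem_FR3proj_of_pair_bound hx hρ (by omega) fun i j hi hj hij => ?_
  wlog hlt : i < j generalizing i j with H
  · linarith [H j i hj hi hij.symm (lt_of_le_of_ne (not_lt.1 hlt) hij.symm), mul_comm (x i) (x j)]
  have hs' : 2 * (ρ : ℝ) ≤ sparsity x := by exact_mod_cast (by omega : 2 * ρ ≤ sparsity x)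
  have hρ' : (2 : ℝ) ≤ ρ := by exact_mod_cast hρ
  have hD : 0 < ((sparsity x : ℝ) - 2) * ((sparsity x : ℝ) - 2 * ρ + 1) :=
    mul_pos (by linarith) (by linarith)
  have hxij : 0 < 1 - x i - x j := by
    linarith [add_lt_one_of_two_lt_sparsity hx (by omega) hij]
  have hprod : 0 < x i * x j := mul_pos ((hx.2 i).lt_of_ne' hi) ((hx.2 j).lt_of_ne' hj)
  have h := hdiv i j hlt hprod
  rw [div_le_div_iff₀ hxij hD] at h
  linarith

end

theorem stmt18_general {n : ℕ} :
    (∀ ρ : ℕ, 2 ≤ ρ → ρ ≤ (n + 1) / 2 →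
      {p : (Fin n → ℝ) × Matrix (Fin n) (Fin n) ℝ |
        ∃ x, x ∈ simplexF n ∧ sparsity x ≤ 2 * ρ - 1 ∧
          p = (x, Matrix.vecMulVec x x)} ⊆ FR3proj n ρ) ∧
    (∀ ρ : ℕ, (n + 1) / 2 + 1 ≤ ρ → ρ ≤ n →
      {p : (Fin n → ℝ) × Matrix (Fin n) (Fin n) ℝ |
        ∃ x, x ∈ simplexF n ∧ p = (x, Matrix.vecMulVec x x)} ⊆ FR3proj n ρ) ∧
    (∀ ρ : ℕ, 2 ≤ ρ → ρ ≤ n / 2 →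
      {p : (Fin n → ℝ) × Matrix (Fin n) (Fin n) ℝ |
        ∃ x, x ∈ simplexF n ∧ 2 * ρ - 1 < sparsity x ∧
          (∀ i j : Fin n, i < j → 0 < x i * x j →
            x i * x j / (1 - x i - x j) ≤
              ((ρ : ℝ) - 1) * ((ρ : ℝ) - 2) /
                (((sparsity x : ℝ) - 2) * ((sparsity x : ℝ) - 2 * (ρ : ℝ) + 1))) ∧
          p = (x, Matrix.vecMulVec x x)} ⊆ FR3proj n ρ) := by
  refine ⟨?_, ?_, ?_⟩
  · rintro ρ hρ hρn _ ⟨x, hx, hs, rfl⟩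
    exact mem_FR3proj_of_sparsity_le_two_mul_sub_one hx hρ (by omega) hs
  · rintro ρ hρ hρn _ ⟨x, hx, rfl⟩
    have := sparsity_le x
    exact mem_FR3proj_of_sparsity_le_two_mul_sub_one hx (by omega) hρn (by omega)
  · rintro ρ hρ - _ ⟨x, hx, hs, hdiv, rfl⟩
    exact mem_FR3proj_of_div_bound hx hρ hs hdiv

theorem stmt18 {n : ℕ} (hn : 0 < n) :
    (∀ ρ : ℕ, 2 ≤ ρ → ρ ≤ (n + 1) / 2 →
      {p : (Fin n → ℝ) × Matrix (Fin n) (Fin n) ℝ |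
        ∃ x, x ∈ simplexF n ∧ sparsity x ≤ 2 * ρ - 1 ∧
          p = (x, Matrix.vecMulVec x x)} ⊆ FR3proj n ρ) ∧
    (∀ ρ : ℕ, (n + 1) / 2 + 1 ≤ ρ → ρ ≤ n →
      {p : (Fin n → ℝ) × Matrix (Fin n) (Fin n) ℝ |
        ∃ x, x ∈ simplexF n ∧ p = (x, Matrix.vecMulVec x x)} ⊆ FR3proj n ρ) ∧
    (∀ ρ : ℕ, 2 ≤ ρ → ρ ≤ n / 2 →
      {p : (Fin n → ℝ) × Matrix (Fin n) (Fin n) ℝ |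
        ∃ x, x ∈ simplexF n ∧ 2 * ρ - 1 < sparsity x ∧
          (∀ i j : Fin n, i < j → 0 < x i * x j →
            x i * x j / (1 - x i - x j) ≤
              ((ρ : ℝ) - 1) * ((ρ : ℝ) - 2) /
                (((sparsity x : ℝ) - 2) * ((sparsity x : ℝ) - 2 * (ρ : ℝ) + 1))) ∧
          p = (x, Matrix.vecMulVec x x)} ⊆ FR3proj n ρ) :=
  stmt18_general

end
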